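/- arXiv:1103.1130 — 2 statements merged into one kernel-verified Lean document; each statement's English description precedes it below -/
import Mathlib

section
/- Let A, B be N×N complex matrices with A skew-Hermitian, and let u: ℝ → ℝ be locally integrable. If x solves ẋ(t) = (A + u(t)B) x(t) with ‖x(0)‖ = 1, then for every eigenvector φ of A with ‖φ‖ = 1 and all s ≤ t, | |⟨φ, x(t)⟩| − |⟨φ, x(s)⟩| | ≤ ‖B* φ‖ ∫_s^t |u(τ)| dτ. -/
open MeasureTheory Matrix
open scoped InnerProductSpace

/-!
A skew-Hermitian generator conserves `‖x‖`, so `‖x t‖ = 1` throughout. The coefficient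
`f = ⟪φ, x⟫` satisfies `f' = ⟪A*φ, x⟫ + u ⟪B*φ, x⟫ = iλ f + u ⟪B*φ, x⟫`; multiplying by the
unimodular factor `exp (-iλt)` removes the rotation, so `|f|` moves by at most
`∫ |u| |⟪B*φ, x⟫| ≤ ‖B*φ‖ ∫ |u|`. As `u` is only locally integrable, both computations are
carried out for absolutely continuous functions, where the product rule follows from the fact
that an absolutely continuous function with a.e. vanishing derivative is constant.
-/

open Set Filter

/-- `f` is locally absolutely continuous with a.e. derivative `f'`, stated through the
fundamental theorem of calculus. -/
structure IsPrimitive {E : Type*} [NormedAddCommGroup E] [NormedSpace ℝ E]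
    (f f' : ℝ → E) : Prop where
  locallyIntegrable : LocallyIntegrable f' volume
  integral_eq_sub : ∀ a b, ∫ t in a..b, f' t = f b - f a

namespace IsPrimitive

variable {E : Type*} [NormedAddCommGroup E] [NormedSpace ℝ E] {f f' : ℝ → E}

theorem const (c : E) : IsPrimitive (fun _ => c) 0 :=
  ⟨locallyIntegrable_zero, fun a b => by simp⟩

theorem intervalIntegrable (hf : IsPrimitive f f') (a b : ℝ) :
    IntervalIntegrable f' volume a b :=
  (hf.locallyIntegrable.integrableOn_isCompact isCompact_uIcc).intervalIntegrable

theorem of_eq_add_integral (hf' : LocallyIntegrable f' volume) (c : ℝ)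
    (hf : ∀ t, f t = f c + ∫ τ in c..t, f' τ) : IsPrimitive f f' := by
  refine ⟨hf', fun a b => ?_⟩
  have hii (a b : ℝ) : IntervalIntegrable f' volume a b :=
    (hf'.integrableOn_isCompact isCompact_uIcc).intervalIntegrable
  rw [hf a, hf b, ← intervalIntegral.integral_interval_sub_left (hii c b) (hii c a)]
  abel

theorem eq_add_integral (hf : IsPrimitive f f') (c t : ℝ) :
    f t = f c + ∫ τ in c..t, f' τ := by
  rw [hf.integral_eq_sub]; abel

theorem continuous (hf : IsPrimitive f f') : Continuous f := by
  rw [funext (hf.eq_add_integral 0)]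
  exact continuous_const.add (intervalIntegral.continuous_primitive hf.intervalIntegrable 0)

theorem sum {ι : Type*} (s : Finset ι) {f f' : ι → ℝ → E}
    (hf : ∀ i ∈ s, IsPrimitive (f i) (f' i)) :
    IsPrimitive (fun t => ∑ i ∈ s, f i t) (fun t => ∑ i ∈ s, f' i t) := by
  refine ⟨locallyIntegrable_finsetSum s fun i hi => (hf i hi).locallyIntegrable, fun a b => ?_⟩
  rw [intervalIntegral.integral_finsetSum fun i hi => (hf i hi).intervalIntegrable a b,
    ← Finset.sum_sub_distrib]
  exact Finset.sum_congr rfl fun i hi => (hf i hi).integral_eq_sub a b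

theorem absolutelyContinuousOnInterval (hf : IsPrimitive f f') (a b : ℝ) :
    AbsolutelyContinuousOnInterval f a b := by
  have hii := (hf.intervalIntegrable a b).norm
  -- every increment of `f` is bounded by the corresponding increment of `∫ ‖f'‖`
  refine squeeze_zero' (Eventually.of_forall fun _ => Finset.sum_nonneg fun _ _ => dist_nonneg)
    ?_ (hii.absolutelyContinuousOnInterval_intervalIntegral left_mem_uIcc)
  rw [eventually_inf_principal]
  filter_upwards with ⟨n, I⟩ hnI
  simp only [AbsolutelyContinuousOnInterval.disjWithin, mem_ofPred_eq] at hnI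
  refine Finset.sum_le_sum fun i hi => ?_
  obtain ⟨hx, hy⟩ := hnI.1 i hi
  rw [dist_eq_norm, Real.dist_eq, ← hf.integral_eq_sub, intervalIntegral.integral_interval_sub_left
    (hii.mono_set (uIcc_subset_uIcc_left hx)) (hii.mono_set (uIcc_subset_uIcc_left hy))]
  exact intervalIntegral.norm_integral_le_abs_integral_norm

section Complete

variable [CompleteSpace E]

theorem of_hasDerivAt (hf : ∀ t, HasDerivAt f (f' t) t) (hf' : Continuous f') :
    IsPrimitive f f' :=
  ⟨hf'.locallyIntegrable, fun a b =>
    intervalIntegral.integral_eq_sub_of_hasDerivAt (fun t _ => hf t) (hf'.intervalIntegrable a b)⟩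

theorem ae_hasDerivAt (hf : IsPrimitive f f') : ∀ᵐ t, HasDerivAt f (f' t) t := by
  filter_upwards [LocallyIntegrable.ae_hasDerivAt_integral hf.locallyIntegrable] with t ht
  rw [funext (hf.eq_add_integral 0)]
  exact (ht 0).const_add _

variable {F : Type*} [NormedAddCommGroup F] [NormedSpace ℝ F] [CompleteSpace F]

theorem continuousLinearMap_comp (L : E →L[ℝ] F) (hf : IsPrimitive f f') :
    IsPrimitive (fun t => L (f t)) (fun t => L (f' t)) := by
  refine ⟨fun t => ?_, fun a b => ?_⟩
  · obtain ⟨s, hs, hint⟩ := hf.locallyIntegrable t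
    exact ⟨s, hs, L.integrable_comp hint⟩
  · rw [L.intervalIntegral_comp_comm (hf.intervalIntegrable a b), hf.integral_eq_sub, map_sub]

end Complete

section Scalar

variable {𝕜 : Type*} [RCLike 𝕜] {f g f' g' : ℝ → 𝕜}

theorem star (hf : IsPrimitive f f') : IsPrimitive (fun t => star (f t)) (fun t => star (f' t)) :=
  hf.continuousLinearMap_comp RCLike.conjCLE.toContinuousLinearMap

theorem mul (hf : IsPrimitive f f') (hg : IsPrimitive g g') :
    IsPrimitive (fun t => f t * g t) (fun t => f' t * g t + f t * g' t) := by
  have hli : LocallyIntegrable (fun t => f' t * g t + f t * g' t) volume :=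
    (hf.locallyIntegrable.mul_continuous hg.continuous).add
      (hg.locallyIntegrable.continuous_mul hf.continuous)
  refine ⟨hli, fun a b => ?_⟩
  have hP : IsPrimitive (fun x => ∫ t in a..x, (f' t * g t + f t * g' t)) _ :=
    of_eq_add_integral hli a fun x => by simp
  let H : ℝ → 𝕜 := fun x => f x * g x - ∫ t in a..x, (f' t * g t + f t * g' t)
  have hH : AbsolutelyContinuousOnInterval H a b :=
    ((hf.absolutelyContinuousOnInterval a b).fun_smul
      (hg.absolutelyContinuousOnInterval a b)).fun_sub (hP.absolutelyContinuousOnInterval a b)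
  have hH' : ∀ᵐ x, x ∈ uIcc a b → HasDerivAt H 0 x := by
    filter_upwards [hf.ae_hasDerivAt, hg.ae_hasDerivAt, hP.ae_hasDerivAt] with x hfx hgx hPx _
    simpa using (hfx.fun_mul hgx).fun_sub hPx
  obtain ⟨C, hC⟩ := hH.const_of_ae_hasDerivAt_zero hH'
  have hab : H b = H a := (hC b right_mem_uIcc).trans (hC a left_mem_uIcc).symm
  simp only [H, intervalIntegral.integral_same, sub_zero] at hab
  linear_combination -hab

theorem inner {ι : Type*} [Fintype ι] {x v y w : ℝ → EuclideanSpace 𝕜 ι}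
    (hx : ∀ i, IsPrimitive (x · i) (v · i)) (hy : ∀ i, IsPrimitive (y · i) (w · i)) :
    IsPrimitive (fun t => ⟪x t, y t⟫_𝕜) (fun t => ⟪v t, y t⟫_𝕜 + ⟪x t, w t⟫_𝕜) := by
  convert IsPrimitive.sum Finset.univ fun i _ => (hy i).mul (hx i).star using 2
  · rfl
  · rw [add_comm, Finset.sum_add_distrib]
    rfl

end Scalar

end IsPrimitive

theorem Matrix.inner_toLp_mulVec_eq_inner_conjTranspose {𝕜 ι : Type*} [RCLike 𝕜] [Fintype ι]
    (M : Matrix ι ι 𝕜) (φ y : EuclideanSpace 𝕜 ι) :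
    ⟪φ, WithLp.toLp 2 (M *ᵥ y)⟫_𝕜 = ⟪WithLp.toLp 2 (Mᴴ *ᵥ φ), y⟫_𝕜 := by
  simp only [EuclideanSpace.inner_eq_star_dotProduct, star_mulVec, conjTranspose_conjTranspose]
  rw [dotProduct_comm, dotProduct_mulVec, dotProduct_comm]

theorem Matrix.inner_toLp_mulVec_add_inner_eq_zero {𝕜 ι : Type*} [RCLike 𝕜] [Fintype ι]
    {M : Matrix ι ι 𝕜} (hM : Mᴴ = -M) (y : EuclideanSpace 𝕜 ι) :
    ⟪WithLp.toLp 2 (M *ᵥ y), y⟫_𝕜 + ⟪y, WithLp.toLp 2 (M *ᵥ y)⟫_𝕜 = 0 := by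
  rw [inner_toLp_mulVec_eq_inner_conjTranspose, hM, neg_mulVec, WithLp.toLp_neg, inner_neg_left,
    add_neg_cancel]

theorem norm_eq_of_isPrimitive_mulVec {𝕜 ι : Type*} [RCLike 𝕜] [Fintype ι]
    {M : ℝ → Matrix ι ι 𝕜} (hM : ∀ t, (M t)ᴴ = -M t) {x : ℝ → EuclideanSpace 𝕜 ι}
    (hx : ∀ i, IsPrimitive (x · i) fun t => (M t *ᵥ x t) i) (s t : ℝ) : ‖x t‖ = ‖x s‖ := by
  have hn := IsPrimitive.inner (x := x) (y := x) (v := fun t => WithLp.toLp 2 (M t *ᵥ x t))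
    (w := fun t => WithLp.toLp 2 (M t *ᵥ x t)) hx hx
  have h : ⟪x t, x t⟫_𝕜 = ⟪x s, x s⟫_𝕜 := by
    rw [← sub_eq_zero, ← hn.integral_eq_sub]
    simp [inner_toLp_mulVec_add_inner_eq_zero (hM _)]
  rw [inner_self_eq_norm_sq_to_K, inner_self_eq_norm_sq_to_K] at h
  exact (pow_left_inj₀ (norm_nonneg _) (norm_nonneg _) two_ne_zero).1 (by exact_mod_cast h)

theorem IsPrimitive.inner_mulVec {𝕜 ι : Type*} [RCLike 𝕜] [Fintype ι]
    {M : ℝ → Matrix ι ι 𝕜} {x : ℝ → EuclideanSpace 𝕜 ι}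
    (hx : ∀ i, IsPrimitive (x · i) fun t => (M t *ᵥ x t) i) (φ : EuclideanSpace 𝕜 ι) :
    IsPrimitive (fun t => ⟪φ, x t⟫_𝕜) fun t => ⟪WithLp.toLp 2 ((M t)ᴴ *ᵥ φ), x t⟫_𝕜 := by
  have h := IsPrimitive.inner (x := fun _ => φ) (v := 0)
    (w := fun t => WithLp.toLp 2 (M t *ᵥ x t)) (fun i => .const (φ i)) hx
  simpa only [Pi.zero_apply, inner_zero_left, zero_add,
    inner_toLp_mulVec_eq_inner_conjTranspose] using h

theorem IsPrimitive.abs_norm_sub_norm_le_integral {f g : ℝ → ℂ} {G : ℝ → ℝ} {lam s t : ℝ}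
    (hf : IsPrimitive f fun τ => Complex.I * lam * f τ + g τ) (hgG : ∀ τ, ‖g τ‖ ≤ G τ)
    (hG : IntervalIntegrable G volume s t) (hst : s ≤ t) :
    |‖f t‖ - ‖f s‖| ≤ ∫ τ in s..t, G τ := by
  set e : ℝ → ℂ := fun τ => Complex.exp (-(Complex.I * lam) * τ)
  have he : IsPrimitive e fun τ => -(Complex.I * lam) * e τ :=
    .of_hasDerivAt (fun τ => by
      have hτ : HasDerivAt (fun τ : ℝ => (τ : ℂ)) 1 τ := (hasDerivAt_id τ).ofReal_comp
      exact (hτ.const_mul _).cexp.congr_deriv (by ring)) (by fun_prop)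
  have hne : ∀ τ, ‖e τ‖ = 1 := fun τ => by simp [e, Complex.norm_exp]
  have hef : e t * f t - e s * f s = ∫ τ in s..t, e τ * g τ := by
    rw [← (he.mul hf).integral_eq_sub]
    congr 1; ext τ; ring
  calc |‖f t‖ - ‖f s‖| = |‖e t * f t‖ - ‖e s * f s‖| := by simp [hne]
    _ ≤ ‖e t * f t - e s * f s‖ := abs_norm_sub_norm_le _ _
    _ ≤ ∫ τ in s..t, G τ := hef ▸ intervalIntegral.norm_integral_le_of_norm_le hst
        (ae_of_all _ fun τ _ => by simpa [hne] using hgG τ) hG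

theorem stmt_12_general (N : ℕ) (A B : Matrix (Fin N) (Fin N) ℂ)
    (hA : Aᴴ = -A) (hB : Bᴴ = -B)
    (u : ℝ → ℝ) (hu : LocallyIntegrable u volume)
    (x : ℝ → EuclideanSpace ℂ (Fin N))
    (hx : ∀ i, LocallyIntegrable (fun τ => (A + (u τ : ℂ) • B).mulVec (x τ) i) volume)
    (hode : ∀ t : ℝ, ∀ i, x t i = x 0 i + ∫ τ in (0:ℝ)..t, (A + (u τ : ℂ) • B).mulVec (x τ) i)
    (hx0 : ‖x 0‖ = 1)
    (φ : EuclideanSpace ℂ (Fin N))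
    (lam : ℝ) (hφ : ∀ i, A.mulVec φ i = (Complex.I * lam) * φ i)
    (s t : ℝ) (hst : s ≤ t) :
    |‖(⟪φ, x t⟫_ℂ)‖ - ‖(⟪φ, x s⟫_ℂ)‖|
      ≤ ‖(WithLp.equiv 2 (Fin N → ℂ)).symm (Bᴴ.mulVec φ)‖ * ∫ τ in s..t, |u τ| := by
  set ψ : EuclideanSpace ℂ (Fin N) := (WithLp.equiv 2 (Fin N → ℂ)).symm (Bᴴ.mulVec φ)
  set M : ℝ → Matrix (Fin N) (Fin N) ℂ := fun τ => A + (u τ : ℂ) • B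
  have hxM : ∀ i, IsPrimitive (x · i) fun τ => (M τ *ᵥ x τ) i :=
    fun i => .of_eq_add_integral (hx i) 0 fun t => hode t i
  have hM : ∀ τ, (M τ)ᴴ = -M τ := fun τ => by simp [M, hA, hB, add_comm]
  have hnorm : ∀ τ, ‖x τ‖ = 1 := fun τ => (norm_eq_of_isPrimitive_mulVec hM hxM 0 τ).trans hx0
  have hMφ : ∀ τ, WithLp.toLp 2 ((M τ)ᴴ *ᵥ φ) = -(Complex.I * lam) • φ + (u τ : ℂ) • ψ :=
    fun τ => by
      ext i
      simp [M, hA, add_mulVec, neg_mulVec, smul_mulVec, hφ, ψ, Complex.real_smul]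
  have hf := IsPrimitive.inner_mulVec hxM φ
  simp only [hMφ, inner_add_left, inner_smul_left, map_neg, map_mul, Complex.conj_I,
    Complex.conj_ofReal, neg_mul, neg_neg] at hf
  have hbound : ∀ τ, ‖(u τ : ℂ) * ⟪ψ, x τ⟫_ℂ‖ ≤ ‖ψ‖ * |u τ| := fun τ => by
    rw [norm_mul, Complex.norm_real, Real.norm_eq_abs, mul_comm]
    gcongr
    simpa [hnorm τ] using norm_inner_le_norm (𝕜 := ℂ) ψ (x τ)
  have hu' : IntervalIntegrable (fun τ => ‖ψ‖ * |u τ|) volume s t :=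
    ((hu.integrableOn_isCompact isCompact_uIcc).intervalIntegrable.abs).const_mul _
  simpa [intervalIntegral.integral_const_mul] using hf.abs_norm_sub_norm_le_integral hbound hu' hst

/-- For skew-Hermitian `A`, `B` and a locally integrable control `u`, along a solution of
`ẋ = (A + u(t)B)x` with `‖x(0)‖ = 1`, for a unit eigenvector `φ` of `A`:
`| |⟨φ, x(t)⟩| − |⟨φ, x(s)⟩| | ≤ ‖B*φ‖ ∫_s^t |u|`. -/
theorem stmt_12 (N : ℕ) (A B : Matrix (Fin N) (Fin N) ℂ)
    (hA : Aᴴ = -A) (hB : Bᴴ = -B)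
    (u : ℝ → ℝ) (hu : LocallyIntegrable u volume)
    (x : ℝ → EuclideanSpace ℂ (Fin N))
    (hx : ∀ i, LocallyIntegrable (fun τ => (A + (u τ : ℂ) • B).mulVec (x τ) i) volume)
    (hode : ∀ t : ℝ, ∀ i, x t i = x 0 i + ∫ τ in (0:ℝ)..t, (A + (u τ : ℂ) • B).mulVec (x τ) i)
    (hx0 : ‖x 0‖ = 1)
    (φ : EuclideanSpace ℂ (Fin N)) (hφnorm : ‖φ‖ = 1)
    (lam : ℝ) (hφ : ∀ i, A.mulVec φ i = (Complex.I * lam) * φ i)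
    (s t : ℝ) (hst : s ≤ t) :
    |‖(⟪φ, x t⟫_ℂ)‖ - ‖(⟪φ, x s⟫_ℂ)‖|
      ≤ ‖(WithLp.equiv 2 (Fin N → ℂ)).symm (Bᴴ.mulVec φ)‖ * ∫ τ in s..t, |u τ| :=
  stmt_12_general N A B hA hB u hu x hx hode hx0 φ lam hφ s t hst
end

section
/- For the Morse potential eigenvalues λ_n = −(α − n − 1/2)², 0 ≤ n ≤ N = ⌊α − 1/2⌋ with α irrational and N ≥ 4: if j, k ∈ {0,...,N} and |λ_j − λ_k| ∈ (ℕ \ {0})·(λ_1 − λ_0), then {j, k} = {0, 1}. -/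
/-!
Since `λ_m - λ_l = (m - l)(2α - 1 - (m + l))` and `λ_1 - λ_0 = 2α - 2`, the hypothesis says that
`s (2α - 1 - (j + k)) = p (2α - 2)` for the integer `s = ±(j - k)`. Comparing the coefficients of the
irrational number `α` and of `1` gives `s = p` and `j + k = 1`.
-/

theorem Irrational.eq_and_eq_of_intCast_mul_add_eq {α : ℝ} (hα : Irrational α) {a b c d : ℤ}
    (h : a * α + b = c * α + d) : a = c ∧ b = d := by
  have hac : a = c := by
    by_contra hne
    have hrat : ((a - c : ℤ) : ℝ) * α = ((d - b : ℤ) : ℝ) := by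
      push_cast
      linear_combination h
    exact Int.not_irrational (d - b) (hrat ▸ hα.intCast_mul (sub_ne_zero.2 hne))
  subst hac
  exact ⟨rfl, by exact_mod_cast add_left_cancel h⟩

theorem Irrational.eq_one_of_mul_sub_eq_mul_sub {α : ℝ} (hα : Irrational α) {s t m : ℤ}
    (ht : t ≠ 0) (h : s * (2 * α - 1 - m) = t * (2 * α - 2)) : m = 1 := by
  obtain ⟨hst, hconst⟩ := hα.eq_and_eq_of_intCast_mul_add_eq
    (a := 2 * s) (b := -(s * (1 + m))) (c := 2 * t) (d := -(2 * t)) (by push_cast; linear_combination h)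
  have hs : s = t := by omega
  subst hs
  have : s * (1 + m) = s * 2 := by linarith
  linarith [mul_left_cancel₀ ht this]

theorem morse_eigenvalue_sub (α x y : ℝ) :
    -(α - x - 1 / 2) ^ 2 - -(α - y - 1 / 2) ^ 2 = (x - y) * (2 * α - 1 - (x + y)) := by
  ring

theorem stmt_15_general (α : ℝ) (hα : Irrational α)
    (lam : ℕ → ℝ) (hlam : ∀ n, lam n = -(α - n - 1 / 2) ^ 2)
    (j k : ℕ)
    (hmult : ∃ p : ℕ, p ≠ 0 ∧ |lam j - lam k| = p * (lam 1 - lam 0)) :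
    (j = 0 ∧ k = 1) ∨ (j = 1 ∧ k = 0) := by
  obtain ⟨p, hp, habs⟩ := hmult
  have hdiff : lam j - lam k = ((j : ℤ) - k : ℤ) * (2 * α - 1 - ((j + k : ℤ) : ℝ)) := by
    rw [hlam, hlam, morse_eigenvalue_sub]; push_cast; ring
  have hgap : lam 1 - lam 0 = 2 * α - 2 := by
    rw [hlam, hlam, morse_eigenvalue_sub]; push_cast; ring
  obtain ⟨s, hs⟩ : ∃ s : ℤ, s * (2 * α - 1 - ((j + k : ℤ) : ℝ)) = (p : ℤ) * (2 * α - 2) := by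
    rcases abs_choice (lam j - lam k) with h | h
    · exact ⟨j - k, by rw [← hdiff, ← h, habs, hgap]; push_cast; ring⟩
    · refine ⟨k - j, ?_⟩
      rw [show ((k - j : ℤ) : ℝ) = -((j - k : ℤ) : ℝ) by push_cast; ring, neg_mul, ← hdiff, ← h,
        habs, hgap]
      push_cast; ring
  have := hα.eq_one_of_mul_sub_eq_mul_sub (by exact_mod_cast hp) hs
  omega

/-- For the Morse eigenvalues with `α` irrational and `N = ⌊α − 1/2⌋ ≥ 4`: if
`|λ_j − λ_k|` is a nonzero natural multiple of `λ_1 − λ_0` with `j, k ≤ N`,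
then `{j, k} = {0, 1}`. -/
theorem stmt_15 (α : ℝ) (hα : Irrational α) (hα2 : 1 / 2 < α)
    (N : ℕ) (hN : (N : ℝ) = ⌊α - 1 / 2⌋) (hN4 : 4 ≤ N)
    (lam : ℕ → ℝ) (hlam : ∀ n, lam n = -(α - n - 1 / 2) ^ 2)
    (j k : ℕ) (hj : j ≤ N) (hk : k ≤ N)
    (hmult : ∃ p : ℕ, p ≠ 0 ∧ |lam j - lam k| = p * (lam 1 - lam 0)) :
    (j = 0 ∧ k = 1) ∨ (j = 1 ∧ k = 0) :=
  stmt_15_general α hα lam hlam j k hmult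
end
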